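/- Let m ≥ 6 be a multiple of 3. If m − 1 has a witness, then B(R(m) + 1) = m/3; if m − 1 has no witness, then B(R(m) + 1) = m/3 − 1. In both cases, B(R(m) + 2) = m/3 and B(R(m) + 3) = m/3 + 1. -/

import Mathlib

/-- The auxiliary sequence: `a 1 = 3`, `a i = 3 * a (i-1) - 1` for `i ≥ 2`. -/
def a : ℕ → ℕ
  | 0 => 0
  | 1 => 3
  | n + 2 => 3 * a (n + 1) - 1

/-- `R(m, i) = max(0, ⌊(m − a i − 1)/3^i⌋)` (truncated ℕ-subtraction gives the max). -/
def Rmi (m i : ℕ) : ℕ := (m - a i - 1) / 3 ^ i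

/-- `R(m) = ∑_{i=1}^∞ R(m, i)`; all terms with `i > m` vanish, so a finite sum suffices. -/
def R (m : ℕ) : ℕ := ∑ i ∈ Finset.Icc 1 m, Rmi m i

/-- `m` has a witness pair `(k, i)` of positive integers with `m = k·3^i + a i`. -/
def HasWitness (m : ℕ) : Prop := ∃ k i : ℕ, 1 ≤ k ∧ 1 ≤ i ∧ m = k * 3 ^ i + a i

/-- `B` is the `B`-sequence: `B 0 = 0`, `B n = n` for `1 ≤ n ≤ 5`, and
`B n = B (n - B (n-1)) + B (n - B (n-2)) + B (n - B (n-3))` for `n ≥ 6`. -/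
def IsBSeq (B : ℕ → ℕ) : Prop :=
  B 0 = 0 ∧ (∀ n, 1 ≤ n → n ≤ 5 → B n = n) ∧
    ∀ n, 6 ≤ n → B n = B (n - B (n - 1)) + B (n - B (n - 2)) + B (n - B (n - 3))

/-!
In the `B`-sequence every value `v ≥ 1` fills a block of consecutive indices, of length two if
`v` has a witness and one otherwise, so `B` is the inverse of
`firstIndex v = v + #{w < v | w has a witness}`. Witnesses are self-similar (`3t` has one iff
`t ≥ 2`, `3t + 1` never, `3t + 2` iff `t + 1` does), which gives
`firstIndex (3t + 2) = 3t + firstIndex (t + 1)`. With it the recursion is checked block by block: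
for `n` in the block of `3t + 2`, `3t + 3` or `3t + 4`, the three indices `n - B (n - j)` lie in
the blocks of `t`, `t + 1` and `t + 2`. Finally `R m` counts the witnessed values below `m`, so
`R m + 3 = firstIndex (m / 3 + 1)` when `3 ∣ m`, `m ≥ 6`.
-/
lemma a_succ {i : ℕ} (hi : 1 ≤ i) : a (i + 1) = 3 * a i - 1 := by
  obtain ⟨j, rfl⟩ : ∃ j, i = j + 1 := ⟨i - 1, by omega⟩
  rfl

lemma add_two_le_a {i : ℕ} (hi : 1 ≤ i) : i + 2 ≤ a i := by
  induction i, hi using Nat.le_induction with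
  | base => decide
  | succ i hi ih => have := a_succ hi; omega

def IsWitness (m i : ℕ) : Prop := 1 ≤ i ∧ ∃ k, 1 ≤ k ∧ m = k * 3 ^ i + a i

lemma hasWitness_iff {m : ℕ} : HasWitness m ↔ ∃ i, IsWitness m i :=
  ⟨fun ⟨k, i, hk, hi, h⟩ ↦ ⟨i, hi, k, hk, h⟩,
    fun ⟨i, hi, k, hk, h⟩ ↦ ⟨k, i, hk, hi, h⟩⟩

lemma IsWitness.le {m i : ℕ} (h : IsWitness m i) : 3 ^ i + a i ≤ m := by
  obtain ⟨-, k, hk, rfl⟩ := h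
  have := Nat.le_mul_of_pos_left (3 ^ i) hk
  omega

lemma isWitness_one_iff {m : ℕ} : IsWitness m 1 ↔ ∃ s, 2 ≤ s ∧ m = 3 * s := by
  constructor
  · rintro ⟨-, k, hk, rfl⟩
    exact ⟨k + 1, by omega, by simp only [a]; ring⟩
  · rintro ⟨s, hs, rfl⟩
    exact ⟨le_rfl, s - 1, by omega, by simp only [a]; omega⟩

lemma isWitness_succ_iff {m i : ℕ} (hi : 1 ≤ i) :
    IsWitness m (i + 1) ↔ ∃ s, m + 1 = 3 * s ∧ IsWitness s i := by
  have key : ∀ k, k * 3 ^ (i + 1) + a (i + 1) + 1 = 3 * (k * 3 ^ i + a i) := fun k ↦ by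
    have : k * 3 ^ (i + 1) = 3 * (k * 3 ^ i) := by ring
    have := add_two_le_a hi
    rw [a_succ hi]
    omega
  constructor
  · rintro ⟨-, k, hk, rfl⟩
    exact ⟨_, key k, hi, k, hk, rfl⟩
  · rintro ⟨s, hs, -, k, hk, rfl⟩
    exact ⟨by omega, k, hk, by have := key k; omega⟩

lemma IsWitness.unique {m i j : ℕ} (hi : IsWitness m i) (hj : IsWitness m j) : i = j := by
  induction i generalizing m j with
  | zero => exact absurd hi.1 (by omega)
  | succ i ih =>
    obtain _ | _ | j := j
    · exact absurd hj.1 (by omega)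
    · obtain _ | i := i
      · rfl
      obtain ⟨s, hs, -⟩ := (isWitness_succ_iff (by omega)).1 hi
      obtain ⟨r, -, rfl⟩ := isWitness_one_iff.1 hj
      omega
    · obtain _ | i := i
      · obtain ⟨s, hs, -⟩ := (isWitness_succ_iff (by omega)).1 hj
        obtain ⟨r, -, rfl⟩ := isWitness_one_iff.1 hi
        omega
      obtain ⟨s, hs, his⟩ := (isWitness_succ_iff (by omega)).1 hi
      obtain ⟨r, hr, hjr⟩ := (isWitness_succ_iff (by omega)).1 hj
      obtain rfl : r = s := by omega
      rw [ih his hjr]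

lemma HasWitness.six_le {m : ℕ} (h : HasWitness m) : 6 ≤ m := by
  obtain ⟨i, hi⟩ := hasWitness_iff.1 h
  have := hi.1
  have := hi.le
  have := add_two_le_a hi.1
  have := Nat.le_self_pow (n := i) (by omega) 3
  omega

lemma hasWitness_three_mul {t : ℕ} : HasWitness (3 * t) ↔ 2 ≤ t :=
  ⟨fun h ↦ by have := h.six_le; omega,
    fun ht ↦ hasWitness_iff.2 ⟨1, isWitness_one_iff.2 ⟨t, ht, rfl⟩⟩⟩

lemma not_hasWitness_three_mul_add_one (t : ℕ) : ¬HasWitness (3 * t + 1) := by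
  rintro h
  obtain ⟨_ | _ | i, hi⟩ := hasWitness_iff.1 h
  · exact absurd hi.1 (by omega)
  · obtain ⟨s, -, hs⟩ := isWitness_one_iff.1 hi
    omega
  · obtain ⟨s, hs, -⟩ := (isWitness_succ_iff (by omega)).1 hi
    omega

lemma hasWitness_three_mul_add_two {t : ℕ} : HasWitness (3 * t + 2) ↔ HasWitness (t + 1) := by
  simp only [hasWitness_iff]
  constructor
  · rintro ⟨_ | _ | i, hi⟩
    · exact absurd hi.1 (by omega)
    · obtain ⟨s, -, hs⟩ := isWitness_one_iff.1 hi
      omega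
    · obtain ⟨s, hs, his⟩ := (isWitness_succ_iff (by omega)).1 hi
      exact ⟨i + 1, by rwa [show t + 1 = s by omega]⟩
  · rintro ⟨i, hi⟩
    exact ⟨i + 1, (isWitness_succ_iff hi.1).2 ⟨t + 1, by ring, hi⟩⟩

open Classical in
/-- The index of the first occurrence of `v` in the `B`-sequence, in which every value occurs
once, or twice if it has a witness. -/
noncomputable def firstIndex (v : ℕ) : ℕ := v + Nat.count HasWitness v

lemma le_firstIndex (v : ℕ) : v ≤ firstIndex v := Nat.le_add_right _ _

lemma firstIndex_of_le_six {v : ℕ} (hv : v ≤ 6) : firstIndex v = v := by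
  classical
  rw [firstIndex, Nat.count_iff_forall_not.2 fun w hw h ↦ by have := h.six_le; omega]
  rfl

lemma firstIndex_succ_of_hasWitness {v : ℕ} (h : HasWitness v) :
    firstIndex (v + 1) = firstIndex v + 2 := by
  simp only [firstIndex, Nat.count_succ, if_pos h]
  omega

lemma firstIndex_succ_of_not_hasWitness {v : ℕ} (h : ¬HasWitness v) :
    firstIndex (v + 1) = firstIndex v + 1 := by
  simp only [firstIndex, Nat.count_succ, if_neg h]
  omega

lemma firstIndex_lt_succ (v : ℕ) : firstIndex v < firstIndex (v + 1) := by
  by_cases h : HasWitness v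
  · rw [firstIndex_succ_of_hasWitness h]; omega
  · rw [firstIndex_succ_of_not_hasWitness h]; omega

lemma firstIndex_strictMono : StrictMono firstIndex :=
  strictMono_nat_of_lt_succ firstIndex_lt_succ

/-- `3s` and `3s + 1` occur twice and once, and `3s + 2` as often as `s + 1`. -/
lemma firstIndex_three_mul_add_two {t : ℕ} (ht : 1 ≤ t) :
    firstIndex (3 * t + 2) = 3 * t + firstIndex (t + 1) := by
  induction t, ht using Nat.le_induction with
  | base => rw [firstIndex_of_le_six (by norm_num), firstIndex_of_le_six (by norm_num)]
  | succ t ht ih =>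
    have h₀ : firstIndex (3 * t + 4) = firstIndex (3 * t + 3) + 2 :=
      firstIndex_succ_of_hasWitness (hasWitness_three_mul.2 (by omega : 2 ≤ t + 1))
    have h₁ : firstIndex (3 * t + 5) = firstIndex (3 * t + 4) + 1 :=
      firstIndex_succ_of_not_hasWitness (not_hasWitness_three_mul_add_one (t + 1))
    by_cases hw : HasWitness (t + 1)
    · have h₂ : firstIndex (3 * t + 3) = firstIndex (3 * t + 2) + 2 :=
        firstIndex_succ_of_hasWitness (hasWitness_three_mul_add_two.2 hw)
      have h₃ : firstIndex (t + 2) = firstIndex (t + 1) + 2 := firstIndex_succ_of_hasWitness hw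
      show firstIndex (3 * t + 5) = 3 * (t + 1) + firstIndex (t + 2)
      omega
    · have h₂ : firstIndex (3 * t + 3) = firstIndex (3 * t + 2) + 1 :=
        firstIndex_succ_of_not_hasWitness (mt hasWitness_three_mul_add_two.1 hw)
      have h₃ : firstIndex (t + 2) = firstIndex (t + 1) + 1 :=
        firstIndex_succ_of_not_hasWitness hw
      show firstIndex (3 * t + 5) = 3 * (t + 1) + firstIndex (t + 2)
      omega

lemma firstIndex_three_mul_add_three {t : ℕ} (ht : 1 ≤ t) :
    firstIndex (3 * t + 3) = 3 * t + firstIndex (t + 2) := by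
  have := firstIndex_three_mul_add_two ht
  by_cases hw : HasWitness (t + 1)
  · have h₂ : firstIndex (3 * t + 3) = firstIndex (3 * t + 2) + 2 :=
      firstIndex_succ_of_hasWitness (hasWitness_three_mul_add_two.2 hw)
    have h₃ : firstIndex (t + 2) = firstIndex (t + 1) + 2 := firstIndex_succ_of_hasWitness hw
    omega
  · have h₂ : firstIndex (3 * t + 3) = firstIndex (3 * t + 2) + 1 :=
      firstIndex_succ_of_not_hasWitness (mt hasWitness_three_mul_add_two.1 hw)
    have h₃ : firstIndex (t + 2) = firstIndex (t + 1) + 1 := firstIndex_succ_of_not_hasWitness hw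
    omega

noncomputable def bSeq (n : ℕ) : ℕ := Nat.findGreatest (fun v ↦ firstIndex v ≤ n) n

/-- `w = v + 1` is passed explicitly, so that callers can write it in the normal form (`3 * t + 2`
rather than `3 * t + 1 + 1`) that `omega` matches against their hypotheses. -/
lemma bSeq_eq_of {n v : ℕ} (w : ℕ) (hw : w = v + 1) (h₁ : firstIndex v ≤ n)
    (h₂ : n < firstIndex w) : bSeq n = v := by
  subst hw
  refine Nat.findGreatest_eq_iff.2
    ⟨(le_firstIndex v).trans h₁, fun _ ↦ h₁, fun u hvu _ hu ↦ ?_⟩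
  exact absurd (h₂.trans_le (firstIndex_strictMono.monotone hvu)) (not_lt.2 hu)

lemma firstIndex_bSeq_le (n : ℕ) : firstIndex (bSeq n) ≤ n :=
  Nat.findGreatest_spec (P := fun v ↦ firstIndex v ≤ n) (m := 0) (Nat.zero_le n)
    (by rw [firstIndex_of_le_six (Nat.zero_le 6)]; exact Nat.zero_le n)

lemma lt_firstIndex_bSeq_succ (n : ℕ) : n < firstIndex (bSeq n + 1) := by
  by_contra! h
  by_cases hn : bSeq n + 1 ≤ n
  · exact Nat.findGreatest_is_greatest (Nat.lt_succ_self _) hn h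
  · have := le_firstIndex (bSeq n + 1)
    omega

lemma bSeq_le (n : ℕ) : bSeq n ≤ n := Nat.findGreatest_le n

lemma bSeq_pos {n : ℕ} (hn : 1 ≤ n) : 1 ≤ bSeq n := by
  by_contra! h
  have := lt_firstIndex_bSeq_succ n
  rw [Nat.lt_one_iff.1 h, firstIndex_of_le_six (by omega)] at this
  omega

lemma bSeq_of_le_five {n : ℕ} (hn : n ≤ 5) : bSeq n = n :=
  bSeq_eq_of (n + 1) rfl (firstIndex_of_le_six (by omega)).le
    (by rw [firstIndex_of_le_six (by omega)]; omega)

def RecursionAt (f : ℕ → ℕ) (n : ℕ) : Prop :=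
  f n = f (n - f (n - 1)) + f (n - f (n - 2)) + f (n - f (n - 3))

section Blocks

variable {t : ℕ}

lemma recursionAt_firstIndex_three_mul_add_two (ht : 2 ≤ t) :
    RecursionAt bSeq (firstIndex (3 * t + 2)) := by
  have := firstIndex_three_mul_add_two (by omega : 1 ≤ t)
  have : firstIndex (3 * t + 1) = firstIndex (3 * t) + 2 :=
    firstIndex_succ_of_hasWitness (hasWitness_three_mul.2 ht)
  have : firstIndex (3 * t + 2) = firstIndex (3 * t + 1) + 1 :=
    firstIndex_succ_of_not_hasWitness (not_hasWitness_three_mul_add_one t)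
  have : firstIndex t < firstIndex (t + 1) := firstIndex_lt_succ _
  have : firstIndex (t + 1) < firstIndex (t + 2) := firstIndex_lt_succ _
  have : firstIndex (3 * t + 2) < firstIndex (3 * t + 3) := firstIndex_lt_succ _
  generalize hn : firstIndex (3 * t + 2) = n
  have e₀ : bSeq n = 3 * t + 2 := by apply bSeq_eq_of (3 * t + 3) rfl <;> omega
  have e₁ : bSeq (n - 1) = 3 * t + 1 := by apply bSeq_eq_of (3 * t + 2) rfl <;> omega
  have e₂ : bSeq (n - 2) = 3 * t := by apply bSeq_eq_of (3 * t + 1) rfl <;> omega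
  have e₃ : bSeq (n - 3) = 3 * t := by apply bSeq_eq_of (3 * t + 1) rfl <;> omega
  have e₄ : bSeq (n - (3 * t + 1)) = t := by apply bSeq_eq_of (t + 1) rfl <;> omega
  have e₅ : bSeq (n - 3 * t) = t + 1 := by apply bSeq_eq_of (t + 2) rfl <;> omega
  rw [RecursionAt, e₀, e₁, e₂, e₃, e₄, e₅]
  ring

lemma recursionAt_firstIndex_three_mul_add_two_add_one (ht : 1 ≤ t) (hw : HasWitness (t + 1)) :
    RecursionAt bSeq (firstIndex (3 * t + 2) + 1) := by
  have := firstIndex_three_mul_add_two ht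
  have : firstIndex (3 * t + 2) = firstIndex (3 * t + 1) + 1 :=
    firstIndex_succ_of_not_hasWitness (not_hasWitness_three_mul_add_one t)
  have : firstIndex (3 * t + 3) = firstIndex (3 * t + 2) + 2 :=
    firstIndex_succ_of_hasWitness (hasWitness_three_mul_add_two.2 hw)
  have : firstIndex (t + 2) = firstIndex (t + 1) + 2 := firstIndex_succ_of_hasWitness hw
  have : firstIndex t < firstIndex (t + 1) := firstIndex_lt_succ _
  have : firstIndex (3 * t) < firstIndex (3 * t + 1) := firstIndex_lt_succ _
  generalize hn : firstIndex (3 * t + 2) + 1 = n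
  have e₀ : bSeq n = 3 * t + 2 := by apply bSeq_eq_of (3 * t + 3) rfl <;> omega
  have e₁ : bSeq (n - 1) = 3 * t + 2 := by apply bSeq_eq_of (3 * t + 3) rfl <;> omega
  have e₂ : bSeq (n - 2) = 3 * t + 1 := by apply bSeq_eq_of (3 * t + 2) rfl <;> omega
  have e₃ : bSeq (n - 3) = 3 * t := by apply bSeq_eq_of (3 * t + 1) rfl <;> omega
  have e₄ : bSeq (n - (3 * t + 2)) = t := by apply bSeq_eq_of (t + 1) rfl <;> omega
  have e₅ : bSeq (n - (3 * t + 1)) = t + 1 := by apply bSeq_eq_of (t + 2) rfl <;> omega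
  have e₆ : bSeq (n - 3 * t) = t + 1 := by apply bSeq_eq_of (t + 2) rfl <;> omega
  rw [RecursionAt, e₀, e₁, e₂, e₃, e₄, e₅, e₆]
  ring

lemma recursionAt_firstIndex_three_mul_add_three (ht : 1 ≤ t) :
    RecursionAt bSeq (firstIndex (3 * t + 3)) := by
  have := firstIndex_three_mul_add_two ht
  have : firstIndex (3 * t + 2) = firstIndex (3 * t + 1) + 1 :=
    firstIndex_succ_of_not_hasWitness (not_hasWitness_three_mul_add_one t)
  have : firstIndex (3 * t) < firstIndex (3 * t + 1) := firstIndex_lt_succ _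
  have : firstIndex t < firstIndex (t + 1) := firstIndex_lt_succ _
  have : firstIndex (3 * t + 3) < firstIndex (3 * t + 4) := firstIndex_lt_succ _
  have : firstIndex (t + 2) < firstIndex (t + 3) := firstIndex_lt_succ _
  by_cases hw : HasWitness (t + 1)
  · have : firstIndex (3 * t + 3) = firstIndex (3 * t + 2) + 2 :=
      firstIndex_succ_of_hasWitness (hasWitness_three_mul_add_two.2 hw)
    have : firstIndex (t + 2) = firstIndex (t + 1) + 2 := firstIndex_succ_of_hasWitness hw
    generalize hn : firstIndex (3 * t + 3) = n
    have e₀ : bSeq n = 3 * t + 3 := by apply bSeq_eq_of (3 * t + 4) rfl <;> omega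
    have e₁ : bSeq (n - 1) = 3 * t + 2 := by apply bSeq_eq_of (3 * t + 3) rfl <;> omega
    have e₂ : bSeq (n - 2) = 3 * t + 2 := by apply bSeq_eq_of (3 * t + 3) rfl <;> omega
    have e₃ : bSeq (n - 3) = 3 * t + 1 := by apply bSeq_eq_of (3 * t + 2) rfl <;> omega
    have e₄ : bSeq (n - (3 * t + 2)) = t + 1 := by apply bSeq_eq_of (t + 2) rfl <;> omega
    have e₅ : bSeq (n - (3 * t + 1)) = t + 1 := by apply bSeq_eq_of (t + 2) rfl <;> omega
    rw [RecursionAt, e₀, e₁, e₂, e₃, e₄, e₅]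
    ring
  · have : firstIndex (3 * t + 3) = firstIndex (3 * t + 2) + 1 :=
      firstIndex_succ_of_not_hasWitness (mt hasWitness_three_mul_add_two.1 hw)
    have : firstIndex (t + 2) = firstIndex (t + 1) + 1 := firstIndex_succ_of_not_hasWitness hw
    generalize hn : firstIndex (3 * t + 3) = n
    have e₀ : bSeq n = 3 * t + 3 := by apply bSeq_eq_of (3 * t + 4) rfl <;> omega
    have e₁ : bSeq (n - 1) = 3 * t + 2 := by apply bSeq_eq_of (3 * t + 3) rfl <;> omega
    have e₂ : bSeq (n - 2) = 3 * t + 1 := by apply bSeq_eq_of (3 * t + 2) rfl <;> omega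
    have e₃ : bSeq (n - 3) = 3 * t := by apply bSeq_eq_of (3 * t + 1) rfl <;> omega
    have e₄ : bSeq (n - (3 * t + 2)) = t := by apply bSeq_eq_of (t + 1) rfl <;> omega
    have e₅ : bSeq (n - (3 * t + 1)) = t + 1 := by apply bSeq_eq_of (t + 2) rfl <;> omega
    have e₆ : bSeq (n - 3 * t) = t + 2 := by apply bSeq_eq_of (t + 3) rfl <;> omega
    rw [RecursionAt, e₀, e₁, e₂, e₃, e₄, e₅, e₆]
    ring

lemma recursionAt_firstIndex_three_mul_add_three_add_one (ht : 1 ≤ t) :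
    RecursionAt bSeq (firstIndex (3 * t + 3) + 1) := by
  have := firstIndex_three_mul_add_two ht
  have : firstIndex (3 * t + 2) = firstIndex (3 * t + 1) + 1 :=
    firstIndex_succ_of_not_hasWitness (not_hasWitness_three_mul_add_one t)
  have : firstIndex (3 * t + 4) = firstIndex (3 * t + 3) + 2 :=
    firstIndex_succ_of_hasWitness (hasWitness_three_mul.2 (by omega : 2 ≤ t + 1))
  have : firstIndex t < firstIndex (t + 1) := firstIndex_lt_succ _
  have : firstIndex (t + 2) < firstIndex (t + 3) := firstIndex_lt_succ _
  by_cases hw : HasWitness (t + 1)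
  · have : firstIndex (3 * t + 3) = firstIndex (3 * t + 2) + 2 :=
      firstIndex_succ_of_hasWitness (hasWitness_three_mul_add_two.2 hw)
    have : firstIndex (t + 2) = firstIndex (t + 1) + 2 := firstIndex_succ_of_hasWitness hw
    generalize hn : firstIndex (3 * t + 3) + 1 = n
    have e₀ : bSeq n = 3 * t + 3 := by apply bSeq_eq_of (3 * t + 4) rfl <;> omega
    have e₁ : bSeq (n - 1) = 3 * t + 3 := by apply bSeq_eq_of (3 * t + 4) rfl <;> omega
    have e₂ : bSeq (n - 2) = 3 * t + 2 := by apply bSeq_eq_of (3 * t + 3) rfl <;> omega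
    have e₃ : bSeq (n - 3) = 3 * t + 2 := by apply bSeq_eq_of (3 * t + 3) rfl <;> omega
    have e₄ : bSeq (n - (3 * t + 3)) = t + 1 := by apply bSeq_eq_of (t + 2) rfl <;> omega
    have e₅ : bSeq (n - (3 * t + 2)) = t + 1 := by apply bSeq_eq_of (t + 2) rfl <;> omega
    rw [RecursionAt, e₀, e₁, e₂, e₃, e₄, e₅]
    ring
  · have : firstIndex (3 * t + 3) = firstIndex (3 * t + 2) + 1 :=
      firstIndex_succ_of_not_hasWitness (mt hasWitness_three_mul_add_two.1 hw)
    have : firstIndex (t + 2) = firstIndex (t + 1) + 1 := firstIndex_succ_of_not_hasWitness hw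
    generalize hn : firstIndex (3 * t + 3) + 1 = n
    have e₀ : bSeq n = 3 * t + 3 := by apply bSeq_eq_of (3 * t + 4) rfl <;> omega
    have e₁ : bSeq (n - 1) = 3 * t + 3 := by apply bSeq_eq_of (3 * t + 4) rfl <;> omega
    have e₂ : bSeq (n - 2) = 3 * t + 2 := by apply bSeq_eq_of (3 * t + 3) rfl <;> omega
    have e₃ : bSeq (n - 3) = 3 * t + 1 := by apply bSeq_eq_of (3 * t + 2) rfl <;> omega
    have e₄ : bSeq (n - (3 * t + 3)) = t := by apply bSeq_eq_of (t + 1) rfl <;> omega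
    have e₅ : bSeq (n - (3 * t + 2)) = t + 1 := by apply bSeq_eq_of (t + 2) rfl <;> omega
    have e₆ : bSeq (n - (3 * t + 1)) = t + 2 := by apply bSeq_eq_of (t + 3) rfl <;> omega
    rw [RecursionAt, e₀, e₁, e₂, e₃, e₄, e₅, e₆]
    ring

lemma recursionAt_firstIndex_three_mul_add_four (ht : 1 ≤ t) :
    RecursionAt bSeq (firstIndex (3 * t + 4)) := by
  have := firstIndex_three_mul_add_three ht
  have : firstIndex (3 * t + 4) = firstIndex (3 * t + 3) + 2 :=
    firstIndex_succ_of_hasWitness (hasWitness_three_mul.2 (by omega : 2 ≤ t + 1))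
  have : firstIndex (3 * t + 5) = firstIndex (3 * t + 4) + 1 :=
    firstIndex_succ_of_not_hasWitness (not_hasWitness_three_mul_add_one (t + 1))
  have : firstIndex (3 * t + 2) < firstIndex (3 * t + 3) := firstIndex_lt_succ _
  have : firstIndex (t + 1) < firstIndex (t + 2) := firstIndex_lt_succ _
  have : firstIndex (t + 2) < firstIndex (t + 3) := firstIndex_lt_succ _
  generalize hn : firstIndex (3 * t + 4) = n
  have e₀ : bSeq n = 3 * t + 4 := by apply bSeq_eq_of (3 * t + 5) rfl <;> omega
  have e₁ : bSeq (n - 1) = 3 * t + 3 := by apply bSeq_eq_of (3 * t + 4) rfl <;> omega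
  have e₂ : bSeq (n - 2) = 3 * t + 3 := by apply bSeq_eq_of (3 * t + 4) rfl <;> omega
  have e₃ : bSeq (n - 3) = 3 * t + 2 := by apply bSeq_eq_of (3 * t + 3) rfl <;> omega
  have e₄ : bSeq (n - (3 * t + 3)) = t + 1 := by apply bSeq_eq_of (t + 2) rfl <;> omega
  have e₅ : bSeq (n - (3 * t + 2)) = t + 2 := by apply bSeq_eq_of (t + 3) rfl <;> omega
  rw [RecursionAt, e₀, e₁, e₂, e₃, e₄, e₅]
  ring

end Blocks

lemma recursionAt_bSeq {n : ℕ} (hn : 6 ≤ n) : RecursionAt bSeq n := by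
  have h₁ := firstIndex_bSeq_le n
  have h₂ := lt_firstIndex_bSeq_succ n
  generalize bSeq n = v at h₁ h₂
  have hv : 6 ≤ v := by
    by_contra! hv
    rw [firstIndex_of_le_six (by omega : v + 1 ≤ 6)] at h₂
    omega
  obtain ⟨t, rfl | rfl | rfl⟩ : ∃ t, v = 3 * t + 2 ∨ v = 3 * t + 3 ∨ v = 3 * t + 4 :=
    ⟨(v - 2) / 3, by omega⟩
  · replace h₂ : n < firstIndex (3 * t + 3) := h₂
    by_cases hw : HasWitness (t + 1)
    · have : firstIndex (3 * t + 3) = firstIndex (3 * t + 2) + 2 :=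
        firstIndex_succ_of_hasWitness (hasWitness_three_mul_add_two.2 hw)
      obtain rfl | rfl : n = firstIndex (3 * t + 2) ∨ n = firstIndex (3 * t + 2) + 1 := by omega
      · exact recursionAt_firstIndex_three_mul_add_two (by omega)
      · exact recursionAt_firstIndex_three_mul_add_two_add_one (by omega) hw
    · have : firstIndex (3 * t + 3) = firstIndex (3 * t + 2) + 1 :=
        firstIndex_succ_of_not_hasWitness (mt hasWitness_three_mul_add_two.1 hw)
      obtain rfl : n = firstIndex (3 * t + 2) := by omega
      exact recursionAt_firstIndex_three_mul_add_two (by omega)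
  · replace h₂ : n < firstIndex (3 * t + 4) := h₂
    have : firstIndex (3 * t + 4) = firstIndex (3 * t + 3) + 2 :=
      firstIndex_succ_of_hasWitness (hasWitness_three_mul.2 (by omega : 2 ≤ t + 1))
    obtain rfl | rfl : n = firstIndex (3 * t + 3) ∨ n = firstIndex (3 * t + 3) + 1 := by omega
    · exact recursionAt_firstIndex_three_mul_add_three (by omega)
    · exact recursionAt_firstIndex_three_mul_add_three_add_one (by omega)
  · replace h₂ : n < firstIndex (3 * t + 5) := h₂
    have : firstIndex (3 * t + 5) = firstIndex (3 * t + 4) + 1 :=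
      firstIndex_succ_of_not_hasWitness (not_hasWitness_three_mul_add_one (t + 1))
    obtain rfl : n = firstIndex (3 * t + 4) := by omega
    exact recursionAt_firstIndex_three_mul_add_four (by omega)

theorem IsBSeq.eq_bSeq {B : ℕ → ℕ} (hB : IsBSeq B) (n : ℕ) : B n = bSeq n := by
  obtain ⟨h₀, hsmall, hrec⟩ := hB
  induction n using Nat.strong_induction_on with
  | _ n ih =>
    rcases Nat.lt_or_ge n 6 with hn | hn
    · rw [bSeq_of_le_five (by omega)]
      rcases n.eq_zero_or_pos with rfl | hpos
      exacts [h₀, hsmall n hpos (by omega)]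
    · have inner : ∀ j, 1 ≤ j → j ≤ 3 → B (n - B (n - j)) = bSeq (n - bSeq (n - j)) := by
        intro j hj₁ hj₃
        have := bSeq_pos (n := n - j) (by omega)
        have := bSeq_le (n - j)
        rw [ih (n - j) (by omega), ih _ (by omega)]
      rw [hrec n hn, inner 1 le_rfl (by norm_num), inner 2 (by norm_num) (by norm_num),
        inner 3 (by norm_num) le_rfl]
      exact (recursionAt_bSeq hn).symm

lemma isWitness_iff_dvd {m i : ℕ} (hi : 1 ≤ i) (hm : a i < m) :
    IsWitness m i ↔ 3 ^ i ∣ m - a i := by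
  constructor
  · rintro ⟨-, k, -, rfl⟩
    exact ⟨k, by rw [Nat.add_sub_cancel, mul_comm]⟩
  · rintro ⟨k, hk⟩
    refine ⟨hi, k, Nat.pos_of_ne_zero fun h ↦ ?_, by rw [mul_comm]; omega⟩
    rw [h, mul_zero] at hk
    omega

open Classical in
lemma Rmi_succ {m i : ℕ} (hi : 1 ≤ i) :
    Rmi (m + 1) i = Rmi m i + if IsWitness m i then 1 else 0 := by
  rcases le_or_gt m (a i) with hm | hm
  · have : ¬IsWitness m i := fun h ↦ by
      have := h.le
      have : 0 < 3 ^ i := by positivity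
      omega
    simp only [Rmi, if_neg this, show m + 1 - a i - 1 = 0 by omega, show m - a i - 1 = 0 by omega,
      Nat.zero_div]
  · rw [Rmi, Rmi, show m + 1 - a i - 1 = m - a i - 1 + 1 by omega, Nat.succ_div,
      show m - a i - 1 + 1 = m - a i by omega]
    by_cases h : IsWitness m i
    · rw [if_pos h, if_pos ((isWitness_iff_dvd hi hm).1 h)]
    · rw [if_neg h, if_neg (mt (isWitness_iff_dvd hi hm).2 h)]

open Classical in
lemma sum_ite_isWitness (m : ℕ) :
    (∑ i ∈ Finset.Icc 1 m, if IsWitness m i then 1 else 0) = if HasWitness m then 1 else 0 := by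
  by_cases h : HasWitness m
  · obtain ⟨i, hi⟩ := hasWitness_iff.1 h
    have hmem : i ∈ Finset.Icc 1 m := by
      have := hi.le
      have := add_two_le_a hi.1
      have : 0 < 3 ^ i := by positivity
      exact Finset.mem_Icc.2 ⟨hi.1, by omega⟩
    rw [if_pos h, Finset.sum_eq_single_of_mem i hmem
      fun j _ hji ↦ if_neg fun hj ↦ hji (hj.unique hi), if_pos hi]
  · rw [if_neg h]
    exact Finset.sum_eq_zero fun i _ ↦ if_neg fun hi ↦ h (hasWitness_iff.2 ⟨i, hi⟩)

open Classical in
lemma R_succ (m : ℕ) : R (m + 1) = R m + if HasWitness m then 1 else 0 := by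
  have hlast : Rmi (m + 1) (m + 1) = 0 := by
    have := add_two_le_a (Nat.le_add_left 1 m)
    rw [Rmi, show m + 1 - a (m + 1) - 1 = 0 by omega, Nat.zero_div]
  rw [R, Finset.sum_Icc_succ_top (by omega), hlast, add_zero, ← sum_ite_isWitness, R,
    ← Finset.sum_add_distrib]
  exact Finset.sum_congr rfl fun i hi ↦ Rmi_succ (Finset.mem_Icc.1 hi).1

/-- `R m` counts the values below `m` that have a witness. -/
lemma R_add_eq_firstIndex (m : ℕ) : R m + m = firstIndex m := by
  induction m with
  | zero => rfl
  | succ m ih =>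
    rw [R_succ]
    by_cases h : HasWitness m
    · rw [if_pos h, firstIndex_succ_of_hasWitness h]; omega
    · rw [if_neg h, firstIndex_succ_of_not_hasWitness h]; omega

/-- for `m ≥ 6` a multiple of 3: `B (R m + 1) = m/3` if `m - 1` has a witness and
`B (R m + 1) = m/3 - 1` otherwise; in both cases `B (R m + 2) = m/3` and `B (R m + 3) = m/3 + 1`. -/
theorem stmt_7 (B : ℕ → ℕ) (hB : IsBSeq B) (m : ℕ) (hm : 6 ≤ m) (h3 : 3 ∣ m) :
    (HasWitness (m - 1) → B (R m + 1) = m / 3) ∧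
    (¬HasWitness (m - 1) → B (R m + 1) = m / 3 - 1) ∧
    B (R m + 2) = m / 3 ∧ B (R m + 3) = m / 3 + 1 := by
  have hm₃ : ∃ t, m = 3 * t + 6 := ⟨m / 3 - 2, by omega⟩
  obtain ⟨t, rfl⟩ := hm₃
  have hR : R (3 * t + 6) + 3 = firstIndex (t + 3) := by
    have := R_add_eq_firstIndex (3 * t + 6)
    have : firstIndex (3 * t + 6) = 3 * (t + 1) + firstIndex (t + 3) :=
      firstIndex_three_mul_add_three (t := t + 1) (by omega)
    omega
  have hw : HasWitness (3 * t + 6 - 1) ↔ HasWitness (t + 2) :=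
    hasWitness_three_mul_add_two (t := t + 1)
  have : firstIndex (t + 1) < firstIndex (t + 2) := firstIndex_lt_succ _
  have : firstIndex (t + 3) < firstIndex (t + 4) := firstIndex_lt_succ _
  simp only [hB.eq_bSeq, show (3 * t + 6) / 3 = t + 2 by omega]
  refine ⟨fun h ↦ ?_, fun h ↦ ?_, ?_, ?_⟩
  · have : firstIndex (t + 3) = firstIndex (t + 2) + 2 := firstIndex_succ_of_hasWitness (hw.1 h)
    apply bSeq_eq_of (t + 3) rfl <;> omega
  · have : firstIndex (t + 3) = firstIndex (t + 2) + 1 :=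
      firstIndex_succ_of_not_hasWitness (mt hw.2 h)
    apply bSeq_eq_of (t + 2) rfl <;> omega
  · have : firstIndex (t + 2) < firstIndex (t + 3) := firstIndex_lt_succ _
    apply bSeq_eq_of (t + 3) rfl <;> omega
  · apply bSeq_eq_of (t + 4) rfl <;> omega
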